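/- Let u be a Schwartz function on ℝ² with coordinates (x, y). With (∂⁻¹f)(x, y) = ∫_{−∞}^{x} f(s, y) ds, define the KP flows K₂(u) = u_y, K₃(u) = ¼u_xxx + 3u u_x + ¾∂⁻¹u_yy, the non-isospectral flow σ₃(u) = 2y·K₃(u) + x·K₂(u) + 2∂⁻¹u_y − u_x, and the Gâteaux derivative σ₃'(u)[w] = 2y(¼w_xxx + 3(uw)_x + ¾∂⁻¹w_yy) + x·w_y + 2∂⁻¹w_y − w_x. Then pointwise on ℝ²: ∂_x(σ₃(u)) − σ₃'(u)[u_x] = u_y. Equivalently, ⟦K₁, σ₃⟧ = K₂ where K₁(u) = u_x, the (l, r) = (1, 3) instance of the relation ⟦K_l, σ_r⟧ = l·K_{l+r−2} of the KP flow algebra. -/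

import Mathlib

/-- Partial derivative in the first coordinate `x`. -/
noncomputable def pdx (f : ℝ × ℝ → ℝ) : ℝ × ℝ → ℝ := fun p => fderiv ℝ f p (1, 0)

/-- Partial derivative in the second coordinate `y`. -/
noncomputable def pdy (f : ℝ × ℝ → ℝ) : ℝ × ℝ → ℝ := fun p => fderiv ℝ f p (0, 1)

/-- The antiderivative in `x` vanishing at `−∞`: `(∂⁻¹f)(x, y) = ∫_{−∞}^{x} f(s, y) ds`. -/
noncomputable def pinv (f : ℝ × ℝ → ℝ) : ℝ × ℝ → ℝ := fun p => ∫ s in Set.Iic p.1, f (s, p.2)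

/-- The KP flow `K₂(u) = u_y`. -/
noncomputable def K2 (u : ℝ × ℝ → ℝ) : ℝ × ℝ → ℝ := pdy u

/-- The KP flow `K₃(u) = ¼u_xxx + 3u u_x + ¾∂⁻¹u_yy`. -/
noncomputable def K3 (u : ℝ × ℝ → ℝ) : ℝ × ℝ → ℝ :=
  fun p => (1 / 4) * pdx (pdx (pdx u)) p + 3 * u p * pdx u p + (3 / 4) * pinv (pdy (pdy u)) p

/-- The non-isospectral KP flow `σ₃(u) = 2y·K₃(u) + x·K₂(u) + 2∂⁻¹u_y − u_x`. -/
noncomputable def sigma3 (u : ℝ × ℝ → ℝ) : ℝ × ℝ → ℝ :=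
  fun p => 2 * p.2 * K3 u p + p.1 * K2 u p + 2 * pinv (pdy u) p - pdx u p

/-- The Gâteaux derivative
`σ₃'(u)[w] = 2y(¼w_xxx + 3(uw)_x + ¾∂⁻¹w_yy) + x·w_y + 2∂⁻¹w_y − w_x`. -/
noncomputable def sigma3' (u w : ℝ × ℝ → ℝ) : ℝ × ℝ → ℝ :=
  fun p => 2 * p.2 * ((1 / 4) * pdx (pdx (pdx w)) p + 3 * pdx (fun q => u q * w q) p
      + (3 / 4) * pinv (pdy (pdy w)) p)
    + p.1 * pdy w p + 2 * pinv (pdy w) p - pdx w p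

/-!
Differentiating `σ₃(u)` in `x` and evaluating `σ₃'(u)` at `u_x` both give
`2y ∂ₓK₃(u) + x u_xy + 2u_y − u_xx`, except that `∂ₓ(x·u_y)` contributes one more `u_y`.
Matching the two uses `∂ₓ∂⁻¹ = ∂⁻¹∂ₓ = id` on Schwartz functions and `∂ₓ∂ᵧ = ∂ᵧ∂ₓ`.
Since `pdx` is built from the Fréchet derivative, `∂⁻¹f` must be shown differentiable in both
variables: writing `(∂⁻¹f)(q) = ∫_{t ≤ 0} f(q + (t, 0)) dt`, one differentiates under the integral,
dominating `∇f` by `C (1 + x²)⁻¹`.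
-/

open MeasureTheory Set Filter Topology SchwartzMap LineDeriv

theorem Prod.add_mk_zero {α β : Type*} [Add α] [AddZeroClass β] (q : α × β) (t : α) :
    q + (t, 0) = (q.1 + t, q.2) :=
  Prod.ext rfl (add_zero q.2)

namespace SchwartzMap

variable {E V : Type*} [NormedAddCommGroup E] [NormedSpace ℝ E]
  [NormedAddCommGroup V] [NormedSpace ℝ V]

theorem exists_norm_le_mul_inv_one_add_fst_sq (g : 𝓢(ℝ × E, V)) :
    ∃ C, 0 ≤ C ∧ ∀ q : ℝ × E, ‖g q‖ ≤ C * (1 + q.1 ^ 2)⁻¹ := by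
  refine ⟨2 ^ 2 * (Finset.Iic (2, 0)).sup (fun m => SchwartzMap.seminorm ℝ m.1 m.2) g,
    by positivity, fun q => ?_⟩
  have hdecay := one_add_le_sup_seminorm_apply (𝕜 := ℝ) (m := (2, 0)) le_rfl le_rfl g q
  simp only [norm_iteratedFDeriv_zero] at hdecay
  have hfst : 1 + q.1 ^ 2 ≤ (1 + ‖q‖) ^ 2 := by
    have hq : |q.1| ≤ ‖q‖ := norm_fst_le q
    nlinarith [abs_nonneg q.1, sq_abs q.1]
  rw [← div_eq_mul_inv, le_div_iff₀ (by positivity)]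
  exact (mul_le_mul_of_nonneg_left hfst (norm_nonneg _)).trans (by linarith)

theorem integrable_comp_mk_fst (g : 𝓢(ℝ × E, V)) (y : E) :
    Integrable fun s : ℝ => g (s, y) := by
  obtain ⟨C, -, hC⟩ := g.exists_norm_le_mul_inv_one_add_fst_sq
  exact (integrable_inv_one_add_sq.const_mul C).mono'
    (g.continuous.comp (by fun_prop)).aestronglyMeasurable (ae_of_all _ fun s => hC (s, y))

theorem tendsto_comp_mk_fst_atBot (g : 𝓢(ℝ × E, V)) (y : E) :
    Tendsto (fun s : ℝ => g (s, y)) atBot (𝓝 0) := by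
  obtain ⟨C, -, hC⟩ := g.exists_norm_le_mul_inv_one_add_fst_sq
  have hsq : Tendsto (fun s : ℝ => 1 + s ^ 2) atBot atTop :=
    tendsto_atTop_add_const_left _ 1 <| by
      simpa only [sq, id] using tendsto_id.atBot_mul_atBot₀ tendsto_id
  have hbound : Tendsto (fun s : ℝ => C * (1 + s ^ 2)⁻¹) atBot (𝓝 0) := by
    simpa using hsq.inv_tendsto_atTop.const_mul C
  exact squeeze_zero_norm (fun s => hC (s, y)) hbound

theorem integrable_comp_add_mk_fst (g : 𝓢(ℝ × E, V)) (q : ℝ × E) :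
    Integrable fun t : ℝ => g (q + (t, 0)) := by
  simpa only [Prod.add_mk_zero] using (g.integrable_comp_mk_fst q.2).comp_add_left q.1

theorem lineDerivOp_comm (f : 𝓢(E, V)) (v w : E) :
    ∂_{v} (∂_{w} f) = ∂_{w} (∂_{v} f) := by
  ext x
  have hsymm : IsSymmSndFDerivAt ℝ f x := (f.smooth 2).contDiffAt.isSymmSndFDerivAt (by simp)
  have hd : DifferentiableAt ℝ (fderiv ℝ f) x :=
    ((f.smooth 2).fderiv_right (m := 1) (by norm_num)).differentiable one_ne_zero x
  change fderiv ℝ (fun y => fderiv ℝ f y w) x v = fderiv ℝ (fun y => fderiv ℝ f y v) x w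
  rw [fderiv_clm_apply hd (differentiableAt_const _), fderiv_clm_apply hd (differentiableAt_const _)]
  simp [hsymm v w]

end SchwartzMap

local notation "∂ₓ" => LineDeriv.lineDerivOp (((1 : ℝ), (0 : ℝ)) : ℝ × ℝ)
local notation "∂ᵧ" => LineDeriv.lineDerivOp (((0 : ℝ), (1 : ℝ)) : ℝ × ℝ)

theorem pdx_coe (f : 𝓢(ℝ × ℝ, ℝ)) : pdx ⇑f = ⇑(∂ₓ f : 𝓢(ℝ × ℝ, ℝ)) := rfl

theorem pdy_coe (f : 𝓢(ℝ × ℝ, ℝ)) : pdy ⇑f = ⇑(∂ᵧ f : 𝓢(ℝ × ℝ, ℝ)) := rfl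

theorem pinv_lineDerivOp_fst (f : 𝓢(ℝ × ℝ, ℝ)) : pinv ⇑(∂ₓ f : 𝓢(ℝ × ℝ, ℝ)) = ⇑f := by
  ext ⟨x, y⟩
  have hderiv (s : ℝ) : HasDerivAt (fun s : ℝ => f (s, y)) ((∂ₓ f : 𝓢(ℝ × ℝ, ℝ)) (s, y)) s :=
    (f.hasFDerivAt (s, y)).comp_hasDerivAt s ((hasDerivAt_id s).prodMk (hasDerivAt_const s y))
  simpa [pinv] using integral_Iic_of_hasDerivAt_of_tendsto' (fun s _ => hderiv s)
    ((∂ₓ f : 𝓢(ℝ × ℝ, ℝ)).integrable_comp_mk_fst y).integrableOn (f.tendsto_comp_mk_fst_atBot y)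

theorem pinv_eq_setIntegral_add (f : ℝ × ℝ → ℝ) (q : ℝ × ℝ) :
    pinv f q = ∫ t in Iic 0, f (q + (t, 0)) := by
  have h := (measurePreserving_add_left volume q.1).setIntegral_preimage_emb
    (measurableEmbedding_addLeft q.1) (fun s => f (s, q.2)) (Iic q.1)
  have hpre : (fun t : ℝ => q.1 + t) ⁻¹' Iic q.1 = Iic 0 := by ext; simp
  rw [hpre] at h
  simp only [pinv, Prod.add_mk_zero, h]

theorem inv_one_add_sq_le_three_mul (a b : ℝ) (h : |a - b| ≤ 1) :
    (1 + b ^ 2)⁻¹ ≤ 3 * (1 + a ^ 2)⁻¹ := by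
  have key : (1 + a ^ 2) / 3 ≤ 1 + b ^ 2 := by
    nlinarith [sq_nonneg (a - 2 * b), abs_le.mp h]
  calc (1 + b ^ 2)⁻¹ ≤ ((1 + a ^ 2) / 3)⁻¹ := inv_anti₀ (by positivity) key
    _ = 3 * (1 + a ^ 2)⁻¹ := by rw [inv_div, div_eq_mul_inv]

theorem hasFDerivAt_pinv (f : 𝓢(ℝ × ℝ, ℝ)) (p : ℝ × ℝ) :
    HasFDerivAt (pinv ⇑f) (∫ t in Iic 0, fderiv ℝ f (p + (t, 0))) p := by
  obtain ⟨C, hC0, hC⟩ := (fderivCLM ℝ (ℝ × ℝ) ℝ f).exists_norm_le_mul_inv_one_add_fst_sq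
  rw [funext (pinv_eq_setIntegral_add ⇑f)]
  refine hasFDerivAt_integral_of_dominated_of_fderiv_le (Metric.ball_mem_nhds p one_pos)
    (μ := volume.restrict (Iic 0)) (F := fun x t => f (x + (t, 0)))
    (F' := fun x t => fderiv ℝ f (x + (t, 0)))
    (bound := fun t => 3 * C * (1 + (p.1 + t) ^ 2)⁻¹)
    (Eventually.of_forall fun x => Continuous.aestronglyMeasurable (by fun_prop))
    (f.integrable_comp_add_mk_fst p).integrableOn
    (fderivCLM ℝ (ℝ × ℝ) ℝ f |>.integrable_comp_add_mk_fst p).restrict.aestronglyMeasurable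
    (ae_of_all _ fun t x hxp => ?_)
    ((integrable_inv_one_add_sq.comp_add_left p.1).const_mul (3 * C)).integrableOn
    (ae_of_all _ fun t x _ => (hasFDerivAt_comp_add_right (t, 0)).2 (f.hasFDerivAt _))
  have hdist : |(p.1 + t) - (x.1 + t)| ≤ 1 := by
    rw [add_sub_add_right_eq_sub]
    refine (norm_fst_le (p - x)).trans ?_
    rw [← dist_eq_norm, dist_comm]
    exact (Metric.mem_ball.mp hxp).le
  calc ‖fderiv ℝ f (x + (t, 0))‖ ≤ C * (1 + (x.1 + t) ^ 2)⁻¹ := hC (x + (t, 0))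
    _ ≤ C * (3 * (1 + (p.1 + t) ^ 2)⁻¹) := by
        gcongr
        exact inv_one_add_sq_le_three_mul _ _ hdist
    _ = _ := by ring

theorem pdx_pinv (f : 𝓢(ℝ × ℝ, ℝ)) : pdx (pinv ⇑f) = ⇑f := by
  ext p
  have hint : Integrable (fun t : ℝ => fderiv ℝ f (p + (t, 0))) (volume.restrict (Iic 0)) :=
    (fderivCLM ℝ (ℝ × ℝ) ℝ f |>.integrable_comp_add_mk_fst p).restrict
  calc pdx (pinv ⇑f) p = ∫ t in Iic 0, fderiv ℝ f (p + (t, 0)) (1, 0) := by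
        rw [pdx, (hasFDerivAt_pinv f p).fderiv, ContinuousLinearMap.integral_apply hint]
    _ = pinv ⇑(∂ₓ f : 𝓢(ℝ × ℝ, ℝ)) p := (pinv_eq_setIntegral_add ⇑(∂ₓ f : 𝓢(ℝ × ℝ, ℝ)) p).symm
    _ = f p := by rw [pinv_lineDerivOp_fst]

theorem differentiable_pinv (f : 𝓢(ℝ × ℝ, ℝ)) : Differentiable ℝ (pinv ⇑f) :=
  fun p => (hasFDerivAt_pinv f p).differentiableAt

section PartialX

variable {f g : ℝ × ℝ → ℝ} {p : ℝ × ℝ}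

theorem pdx_add (hf : DifferentiableAt ℝ f p) (hg : DifferentiableAt ℝ g p) :
    pdx (fun q => f q + g q) p = pdx f p + pdx g p := by
  simp [pdx, fderiv_fun_add hf hg]

theorem pdx_sub (hf : DifferentiableAt ℝ f p) (hg : DifferentiableAt ℝ g p) :
    pdx (fun q => f q - g q) p = pdx f p - pdx g p := by
  simp [pdx, fderiv_fun_sub hf hg]

theorem pdx_mul (hf : DifferentiableAt ℝ f p) (hg : DifferentiableAt ℝ g p) :
    pdx (fun q => f q * g q) p = pdx f p * g p + f p * pdx g p := by
  simp only [pdx, fderiv_fun_mul hf hg, add_apply,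
    smul_apply, smul_eq_mul]
  ring

theorem pdx_const (c : ℝ) : pdx (fun _ => c) p = 0 := by
  simp [pdx]

theorem pdx_fst : pdx (fun q => q.1) p = 1 := by
  simp [pdx, fderiv_fst]

theorem pdx_snd : pdx (fun q => q.2) p = 0 := by
  simp [pdx, fderiv_snd]

end PartialX

theorem differentiable_K3 (u : 𝓢(ℝ × ℝ, ℝ)) : Differentiable ℝ (K3 ⇑u) := by
  have hpinv := differentiable_pinv (∂ᵧ (∂ᵧ u) : 𝓢(ℝ × ℝ, ℝ))
  unfold K3
  simp only [pdx_coe, pdy_coe]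
  fun_prop

theorem pdx_K3 (u : 𝓢(ℝ × ℝ, ℝ)) (p : ℝ × ℝ) :
    pdx (K3 ⇑u) p = 1 / 4 * pdx (pdx (pdx (pdx ⇑u))) p + 3 * pdx (fun q => u q * pdx u q) p
      + 3 / 4 * pdy (pdy ⇑u) p := by
  have hpinv := differentiable_pinv (∂ᵧ (∂ᵧ u) : 𝓢(ℝ × ℝ, ℝ))
  unfold K3
  simp (disch := fun_prop) only [pdx_coe, pdy_coe, pdx_add, pdx_mul, pdx_const, pdx_pinv]
  ring

theorem pdx_sigma3 (u : 𝓢(ℝ × ℝ, ℝ)) (p : ℝ × ℝ) :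
    pdx (sigma3 ⇑u) p = 2 * p.2 * pdx (K3 ⇑u) p + pdy u p + p.1 * pdx (pdy u) p + 2 * pdy u p
      - pdx (pdx u) p := by
  have hpinv := differentiable_pinv (∂ᵧ u : 𝓢(ℝ × ℝ, ℝ))
  have hK3 := differentiable_K3 u
  unfold sigma3 K2
  simp (disch := fun_prop) only [pdx_coe, pdy_coe, pdx_add, pdx_sub, pdx_mul, pdx_const,
    pdx_fst, pdx_snd, pdx_pinv]
  ring

theorem sigma3'_pdx (u : 𝓢(ℝ × ℝ, ℝ)) (p : ℝ × ℝ) :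
    sigma3' ⇑u (pdx ⇑u) p = 2 * p.2 * pdx (K3 ⇑u) p + p.1 * pdx (pdy u) p + 2 * pdy u p
      - pdx (pdx u) p := by
  have hyx (f : 𝓢(ℝ × ℝ, ℝ)) : ∂ᵧ (∂ₓ f) = ∂ₓ (∂ᵧ f) := lineDerivOp_comm f _ _
  rw [pdx_K3]
  simp only [sigma3', pdx_coe, pdy_coe, hyx, pinv_lineDerivOp_fst]

/-- The `(l, r) = (1, 3)` instance `⟦K₁, σ₃⟧ = K₂` of the KP flow algebra relation
`⟦K_l, σ_r⟧ = l·K_{l+r−2}`: for a Schwartz function `u`,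
`∂_x(σ₃(u)) − σ₃'(u)[u_x] = u_y` pointwise on `ℝ²`. -/
theorem kp_K1_sigma3_bracket (u : SchwartzMap (ℝ × ℝ) ℝ) :
    ∀ p : ℝ × ℝ, pdx (sigma3 ⇑u) p - sigma3' ⇑u (pdx ⇑u) p = pdy ⇑u p := by
  intro p
  rw [pdx_sigma3, sigma3'_pdx]
  ring
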